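/- arXiv:1311.0625 — 3 statements merged into one kernel-verified Lean document; each statement's English description precedes it below -/
import Mathlib

section
/- Let q, h, a : ℝ → E³ together with a twice differentiable conical curvature κ : ℝ → ℝ be a Frenet frame of a ruled surface, and assume the frame is positively oriented, i.e., a(s) equals the cross product q(s) × h(s) for all s. Let W(s) = κ(s)·q(s) + a(s) be the Darboux vector. Then for every s, the determinant of the 3×3 matrix whose columns are the coordinates of W(s), W'(s) and W''(s) equals κ'(s)². -/
/-!
The Frenet equations make the `κ • h` terms cancel in `W' = κ' • q + κ • h - κ • h`, so
`W' = κ' • q` and `W'' = κ'' • q + κ' • h`. The determinant with columns `W, W', W''` is the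
triple product `W ⬝ (W' ⨯ W'') = κ'² (κ • q + a) ⬝ (q ⨯ h)`, and `q ⨯ h = a` is a unit vector
orthogonal to `q`.
-/

open RealInnerProductSpace Matrix

noncomputable section

abbrev E3 := EuclideanSpace ℝ (Fin 3)

/-- A Frenet frame of a ruled surface: `q`, `h`, `a` are orthonormal at every
parameter and satisfy the Frenet equations with conical curvature `κ`. -/
def IsFrenetFrame (q h a : ℝ → E3) (κ : ℝ → ℝ) : Prop :=
  (∀ s, ⟪q s, q s⟫ = 1 ∧ ⟪h s, h s⟫ = 1 ∧ ⟪a s, a s⟫ = 1 ∧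
        ⟪q s, h s⟫ = 0 ∧ ⟪q s, a s⟫ = 0 ∧ ⟪h s, a s⟫ = 0) ∧
  (∀ s, HasDerivAt q (h s) s) ∧
  (∀ s, HasDerivAt h (-q s + κ s • a s) s) ∧
  (∀ s, HasDerivAt a (-(κ s • h s)) s)

/-- The Darboux vector of the frame. -/
def darboux (q a : ℝ → E3) (κ : ℝ → ℝ) : ℝ → E3 := fun s => κ s • q s + a s

theorem det_of_cols_eq_dotProduct_cross (u v w : E3) :
    det (of fun i j => ![u, v, w] j i) = u.ofLp ⬝ᵥ (v.ofLp ⨯₃ w.ofLp) := by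
  rw [triple_product_eq_det, ← det_transpose]
  congr 1
  ext i j
  fin_cases i <;> rfl

theorem dotProduct_smul_add_cross_cross_eq_sq {R : Type*} [CommRing R] (u v : Fin 3 → R)
    (k k' k'' : R) (hn : (u ⨯₃ v) ⬝ᵥ (u ⨯₃ v) = 1) :
    (k • u + u ⨯₃ v) ⬝ᵥ ((k' • u) ⨯₃ (k'' • u + k' • v)) = k' ^ 2 := by
  simp only [map_smul, map_add, LinearMap.smul_apply, cross_self, smul_zero, zero_add,
    smul_smul, add_dotProduct, dotProduct_smul, smul_dotProduct, dot_self_cross, hn]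
  simp [sq]

namespace IsFrenetFrame

variable {q h a : ℝ → E3} {κ : ℝ → ℝ}

theorem hasDerivAt_darboux (hf : IsFrenetFrame q h a κ) {κ' s : ℝ} (hκ : HasDerivAt κ κ' s) :
    HasDerivAt (darboux q a κ) (κ' • q s) s := by
  obtain ⟨-, hq, -, ha⟩ := hf
  exact (show HasDerivAt (darboux q a κ) _ s from (hκ.smul (hq s)).add (ha s)).congr_deriv
    (by abel)

theorem deriv_darboux (hf : IsFrenetFrame q h a κ) (hκ : Differentiable ℝ κ) :
    deriv (darboux q a κ) = fun t => deriv κ t • q t :=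
  funext fun t => (hf.hasDerivAt_darboux (hκ t).hasDerivAt).deriv

theorem deriv_deriv_darboux (hf : IsFrenetFrame q h a κ) (hκ : Differentiable ℝ κ) {s : ℝ}
    (hκ' : DifferentiableAt ℝ (deriv κ) s) :
    deriv (deriv (darboux q a κ)) s = deriv (deriv κ) s • q s + deriv κ s • h s := by
  rw [hf.deriv_darboux hκ]
  obtain ⟨-, hq, -⟩ := hf
  exact (hκ'.hasDerivAt.smul (hq s)).deriv.trans (add_comm _ _)

theorem dotProduct_self_eq_one (hf : IsFrenetFrame q h a κ) (s : ℝ) :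
    (a s).ofLp ⬝ᵥ (a s).ofLp = 1 := by
  simpa only [EuclideanSpace.inner_eq_star_dotProduct, star_trivial] using (hf.1 s).2.2.1

end IsFrenetFrame

theorem darboux_det_eq_deriv_sq
    (q h a : ℝ → E3) (κ : ℝ → ℝ)
    (hframe : IsFrenetFrame q h a κ)
    (hκ1 : Differentiable ℝ κ)
    (hκ2 : Differentiable ℝ (deriv κ))
    (horient : ∀ s, a s = crossProduct (q s) (h s)) :
    ∀ s, Matrix.det (Matrix.of fun i j =>
      ![darboux q a κ s, deriv (darboux q a κ) s,
        deriv (deriv (darboux q a κ)) s] j i) = (deriv κ s) ^ 2 := by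
  intro s
  have hnorm := hframe.dotProduct_self_eq_one s
  rw [det_of_cols_eq_dotProduct_cross, hframe.deriv_deriv_darboux hκ1 (hκ2 s), hframe.deriv_darboux hκ1]
  simp only [darboux, WithLp.ofLp_add, WithLp.ofLp_smul, horient] at hnorm ⊢
  exact dotProduct_smul_add_cross_cross_eq_sq _ _ _ _ _ hnorm
end
end

section
/- Let q, h, a : ℝ → E³ together with a conical curvature κ : ℝ → ℝ be a Frenet frame of a ruled surface (defined on all of ℝ), and suppose κ is a constant function (as holds for a Darboux slant ruled surface). If u ∈ E³ is a fixed nonzero vector such that s ↦ ⟪h(s), u⟫ is constant (the surface is h-slant with axis u), then s ↦ ⟪q(s), u⟫ and s ↦ ⟪a(s), u⟫ are also constant; that is, the surface is also q-slant and a-slant with the same axis. -/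
open RealInnerProductSpace Matrix

noncomputable section

/-! Writing `f = ⟪q, u⟫`, `g = ⟪h, u⟫`, `k = ⟪a, u⟫`, the Frenet equations give
`f' = g`, `g' = -f + κ k`, `k' = -κ g`. If `g = c` is constant then `f = κ k`, and
differentiating once more gives `c = f' = κ k' = -κ² c`, so `c = 0`. Hence `f' = k' = 0`. -/

theorem HasDerivAt.inner_const {E : Type*} [NormedAddCommGroup E] [InnerProductSpace ℝ E]
    {f : ℝ → E} {f' : E} {s : ℝ} (hf : HasDerivAt f f' s) (u : E) :
    HasDerivAt (fun t => ⟪f t, u⟫) ⟪f', u⟫ s := by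
  simpa using hf.inner ℝ (hasDerivAt_const s u)

theorem exists_eq_const_of_hasDerivAt_zero {E : Type*} [NormedAddCommGroup E] [NormedSpace ℝ E]
    {f : ℝ → E} (hf : ∀ s, HasDerivAt f 0 s) : ∃ c, ∀ s, f s = c :=
  ⟨f 0, fun s => is_const_of_deriv_eq_zero (fun x => (hf x).differentiableAt)
    (fun x => (hf x).deriv) s 0⟩

namespace IsFrenetFrame

variable {q h a : ℝ → E3} {κ : ℝ → ℝ}

theorem hasDerivAt_inner_q (hframe : IsFrenetFrame q h a κ) (u : E3) (s : ℝ) :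
    HasDerivAt (fun t => ⟪q t, u⟫) ⟪h s, u⟫ s :=
  (hframe.2.1 s).inner_const u

theorem hasDerivAt_inner_h (hframe : IsFrenetFrame q h a κ) (u : E3) (s : ℝ) :
    HasDerivAt (fun t => ⟪h t, u⟫) (-⟪q s, u⟫ + κ s * ⟪a s, u⟫) s := by
  simpa [inner_add_left, inner_smul_left] using (hframe.2.2.1 s).inner_const u

theorem hasDerivAt_inner_a (hframe : IsFrenetFrame q h a κ) (u : E3) (s : ℝ) :
    HasDerivAt (fun t => ⟪a t, u⟫) (-(κ s * ⟪h s, u⟫)) s := by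
  simpa [inner_smul_left] using (hframe.2.2.2 s).inner_const u

theorem inner_q_eq_of_inner_h_const (hframe : IsFrenetFrame q h a κ) {u : E3} {c : ℝ}
    (hslant : ∀ s, ⟪h s, u⟫ = c) (s : ℝ) : ⟪q s, u⟫ = κ s * ⟪a s, u⟫ := by
  have hconst : HasDerivAt (fun t => ⟪h t, u⟫) 0 s := by
    simpa only [hslant] using hasDerivAt_const s c
  linarith [(hframe.hasDerivAt_inner_h u s).unique hconst]

theorem inner_h_eq_zero_of_slant (hframe : IsFrenetFrame q h a κ) {κ₀ : ℝ}
    (hκconst : ∀ s, κ s = κ₀) {u : E3} {c : ℝ} (hslant : ∀ s, ⟪h s, u⟫ = c) : c = 0 := by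
  have hqa : (fun t => ⟪q t, u⟫) = fun t => κ₀ * ⟪a t, u⟫ := by
    funext t
    rw [hframe.inner_q_eq_of_inner_h_const hslant, hκconst]
  have hq' : HasDerivAt (fun t => ⟪q t, u⟫) c 0 := by
    simpa only [hslant] using hframe.hasDerivAt_inner_q u 0
  have hq'' : HasDerivAt (fun t => ⟪q t, u⟫) (κ₀ * -(κ₀ * c)) 0 := by
    rw [hqa]
    simpa only [hslant, hκconst] using (hframe.hasDerivAt_inner_a u 0).const_mul κ₀
  have hc : c * (1 + κ₀ ^ 2) = 0 := by linarith [hq'.unique hq'']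
  exact (mul_eq_zero.mp hc).resolve_right (by positivity)

end IsFrenetFrame

theorem h_slant_implies_q_and_a_slant_general
    (q h a : ℝ → E3) (κ : ℝ → ℝ)
    (hframe : IsFrenetFrame q h a κ)
    (κ₀ : ℝ) (hκconst : ∀ s, κ s = κ₀)
    (u : E3) (c : ℝ)
    (hslant : ∀ s, ⟪h s, u⟫ = c) :
    (∃ c₁ : ℝ, ∀ s, ⟪q s, u⟫ = c₁) ∧ (∃ c₂ : ℝ, ∀ s, ⟪a s, u⟫ = c₂) := by
  have hc : c = 0 := hframe.inner_h_eq_zero_of_slant hκconst hslant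
  subst hc
  constructor
  · refine exists_eq_const_of_hasDerivAt_zero fun s => ?_
    simpa only [hslant] using hframe.hasDerivAt_inner_q u s
  · refine exists_eq_const_of_hasDerivAt_zero fun s => ?_
    simpa only [hslant, mul_zero, neg_zero] using hframe.hasDerivAt_inner_a u s

theorem h_slant_implies_q_and_a_slant
    (q h a : ℝ → E3) (κ : ℝ → ℝ)
    (hframe : IsFrenetFrame q h a κ)
    (κ₀ : ℝ) (hκconst : ∀ s, κ s = κ₀)
    (u : E3) (hu : u ≠ 0) (c : ℝ)
    (hslant : ∀ s, ⟪h s, u⟫ = c) :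
    (∃ c₁ : ℝ, ∀ s, ⟪q s, u⟫ = c₁) ∧ (∃ c₂ : ℝ, ∀ s, ⟪a s, u⟫ = c₂) :=
  h_slant_implies_q_and_a_slant_general q h a κ hframe κ₀ hκconst u c hslant
end
end

section
/- Let q, h, a : ℝ → E³ together with a conical curvature κ : ℝ → ℝ be a Frenet frame of a ruled surface with κ(s) ≠ 0 for all s. If u ∈ E³ is a fixed vector such that ⟪q(s), u⟫ = 0 for all s (u is everywhere perpendicular to the ruling), then u = 0. -/
open RealInnerProductSpace Matrix

noncomputable section

/-! Differentiating `⟪q, u⟫ ≡ 0` with `q' = h` gives `⟪h, u⟫ ≡ 0`; differentiating once more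
gives `κ ⟪a, u⟫ ≡ 0`, hence `⟪a, u⟫ ≡ 0` as `κ` never vanishes. Then `u` is orthogonal to the
orthonormal basis `q, h, a` of `E³`. -/

section InnerProductSpace

variable {F : Type*} [NormedAddCommGroup F] [InnerProductSpace ℝ F]

theorem inner_eq_zero_of_hasDerivAt_of_forall_inner_eq_zero {f f' : ℝ → F} {u : F}
    (hf : ∀ s, HasDerivAt f (f' s) s) (hu : ∀ s, ⟪f s, u⟫ = 0) (s : ℝ) : ⟪f' s, u⟫ = 0 := by
  have hderiv := (hf s).inner ℝ (hasDerivAt_const s u)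
  rw [inner_zero_right, zero_add] at hderiv
  have hconst : HasDerivAt (fun t => ⟪f t, u⟫) 0 s := by
    simpa only [hu] using hasDerivAt_const s (0 : ℝ)
  exact hderiv.unique hconst

theorem orthonormal_vecCons_three {x y z : F} (hx : ⟪x, x⟫ = 1) (hy : ⟪y, y⟫ = 1)
    (hz : ⟪z, z⟫ = 1) (hxy : ⟪x, y⟫ = 0) (hxz : ⟪x, z⟫ = 0) (hyz : ⟪y, z⟫ = 0) :
    Orthonormal ℝ ![x, y, z] := by
  simp only [orthonormal_vecCons_iff, Fin.forall_fin_succ, IsEmpty.forall_iff,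
    norm_eq_sqrt_re_inner (𝕜 := ℝ), RCLike.re_to_real, hx, hy, hz, hxy, hxz, hyz,
    Real.sqrt_one, Matrix.cons_val_zero, Matrix.cons_val_succ, true_and]
  exact .of_isEmpty _

theorem eq_zero_of_orthonormal_of_forall_inner_eq_zero [FiniteDimensional ℝ F] {ι : Type*}
    [Fintype ι] [Nonempty ι] {v : ι → F} (hv : Orthonormal ℝ v)
    (hcard : Fintype.card ι = Module.finrank ℝ F) {u : F} (hu : ∀ i, ⟪v i, u⟫ = 0) : u = 0 := by
  refine InnerProductSpace.ext_inner_left_basis (basisOfOrthonormalOfCardEqFinrank hv hcard)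
    fun i => ?_
  rw [coe_basisOfOrthonormalOfCardEqFinrank, hu, inner_zero_right]

end InnerProductSpace

namespace IsFrenetFrame

variable {q h a : ℝ → E3} {κ : ℝ → ℝ}

theorem orthonormal (hframe : IsFrenetFrame q h a κ) (s : ℝ) :
    Orthonormal ℝ ![q s, h s, a s] :=
  let ⟨hq, hh, ha, hqh, hqa, hha⟩ := hframe.1 s
  orthonormal_vecCons_three hq hh ha hqh hqa hha

end IsFrenetFrame

theorem perp_to_ruling_eq_zero
    (q h a : ℝ → E3) (κ : ℝ → ℝ)
    (hframe : IsFrenetFrame q h a κ)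
    (hκne : ∀ s, κ s ≠ 0)
    (u : E3) (hperp : ∀ s, ⟪q s, u⟫ = 0) :
    u = 0 := by
  have hhu := inner_eq_zero_of_hasDerivAt_of_forall_inner_eq_zero hframe.2.1 hperp
  have hau (s : ℝ) : ⟪a s, u⟫ = 0 := by
    have hh'u := inner_eq_zero_of_hasDerivAt_of_forall_inner_eq_zero hframe.2.2.1 hhu s
    rw [inner_add_left, inner_neg_left, hperp, real_inner_smul_left, neg_zero, zero_add] at hh'u
    exact (mul_eq_zero.mp hh'u).resolve_left (hκne s)
  refine eq_zero_of_orthonormal_of_forall_inner_eq_zero (hframe.orthonormal 0) (by simp) ?_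
  intro i
  fin_cases i
  exacts [hperp 0, hhu 0, hau 0]
end
end
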